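/- If (N,ν) is a (C,D)-Yetter-Drinfeld Hom-module and (A,B) ∈ Aut_{mHH}(H)², then N with the new action h▷n = (C⁻¹BCA⁻¹)(h)·n and new coaction n ↦ n₍₀₎ ⊗ (A∘B⁻¹)(n₍₁₎) is an (ACA⁻¹, AB⁻¹DC⁻¹BCA⁻¹)-Yetter-Drinfeld Hom-module. -/

import Mathlib

/-!
Both structures are transported along Hom-Hopf automorphisms: the action along
`φ = C⁻¹BCA⁻¹`, the coaction along `ψ = AB⁻¹`. Since `φ` and `ψ` commute with all structure
maps of `H`, every axiom survives, and the compatibility condition acquires the pair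
`(ψCφ, ψDφ) = (ACA⁻¹, AB⁻¹DC⁻¹BCA⁻¹)`. The one nontrivial input is that a Hom-Hopf automorphism
`f` commutes with the antipode: `f S f⁻¹` is again a left convolution inverse of the identity,
and such an inverse is unique.
-/

open TensorProduct

/-- A monoidal Hom-Hopf algebra (with bijective antipode) over a field `k`. -/
structure HomHopf (k : Type*) [Field k] (H : Type*) [AddCommGroup H] [Module k H] where
  mul : H →ₗ[k] H →ₗ[k] H
  one : H
  a : H ≃ₗ[k] H
  comul : H →ₗ[k] H ⊗[k] H
  counit : H →ₗ[k] k
  S : H ≃ₗ[k] H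
  hom_assoc : ∀ x y z : H, mul (a x) (mul y z) = mul (mul x y) (a z)
  a_mul : ∀ x y : H, a (mul x y) = mul (a x) (a y)
  mul_one' : ∀ x : H, mul x one = a x
  one_mul' : ∀ x : H, mul one x = a x
  a_one : a one = one
  hom_coassoc : (TensorProduct.map a.symm.toLinearMap comul).comp comul
      = (TensorProduct.assoc k H H H).toLinearMap.comp
          ((TensorProduct.map comul a.symm.toLinearMap).comp comul)
  comul_a : ∀ x : H, comul (a x) = TensorProduct.map a.toLinearMap a.toLinearMap (comul x)
  counit_comul : ∀ x : H,
    (TensorProduct.lid k H) ((TensorProduct.map counit LinearMap.id) (comul x)) = a.symm x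
  comul_counit : ∀ x : H,
    (TensorProduct.rid k H) ((TensorProduct.map LinearMap.id counit) (comul x)) = a.symm x
  counit_a : ∀ x : H, counit (a x) = counit x
  comul_mul : ∀ x y : H, comul (mul x y)
      = (TensorProduct.map (TensorProduct.lift mul) (TensorProduct.lift mul))
          ((TensorProduct.tensorTensorTensorComm k H H H H) (comul x ⊗ₜ[k] comul y))
  comul_one : comul one = one ⊗ₜ[k] one
  counit_mul : ∀ x y : H, counit (mul x y) = counit x * counit y
  counit_one : counit one = 1
  S_a : ∀ x : H, S (a x) = a (S x)
  antipode_left : ∀ x : H,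
    (TensorProduct.lift mul) ((TensorProduct.map S.toLinearMap LinearMap.id) (comul x))
      = counit x • one
  antipode_right : ∀ x : H,
    (TensorProduct.lift mul) ((TensorProduct.map LinearMap.id S.toLinearMap) (comul x))
      = counit x • one

/-- A monoidal Hom-Hopf algebra automorphism. -/
structure IsHomHopfAuto {k : Type*} [Field k] {H : Type*} [AddCommGroup H] [Module k H]
    (HH : HomHopf k H) (f : H ≃ₗ[k] H) : Prop where
  map_mul : ∀ x y : H, f (HH.mul x y) = HH.mul (f x) (f y)
  map_one : f HH.one = HH.one
  map_comul : ∀ x : H, HH.comul (f x)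
      = TensorProduct.map f.toLinearMap f.toLinearMap (HH.comul x)
  map_counit : ∀ x : H, HH.counit (f x) = HH.counit x
  map_a : ∀ x : H, f (HH.a x) = HH.a (f x)

/-- A left-right (A,B)-Yetter-Drinfeld Hom-module over `HH`. -/
structure YDModule {k : Type*} [Field k] {H : Type*} [AddCommGroup H] [Module k H]
    (HH : HomHopf k H) (A B : H ≃ₗ[k] H)
    (M : Type*) [AddCommGroup M] [Module k M] where
  act : H →ₗ[k] M →ₗ[k] M
  coact : M →ₗ[k] M ⊗[k] H
  mu : M ≃ₗ[k] M
  hom_act : ∀ (h g : H) (m : M), act (HH.a h) (act g m) = act (HH.mul h g) (mu m)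
  mu_act : ∀ (h : H) (m : M), mu (act h m) = act (HH.a h) (mu m)
  one_act : ∀ m : M, act HH.one m = mu m
  hom_coact : (TensorProduct.map mu.symm.toLinearMap HH.comul).comp coact
      = (TensorProduct.assoc k M H H).toLinearMap.comp
          ((TensorProduct.map coact HH.a.symm.toLinearMap).comp coact)
  coact_mu : ∀ m : M, coact (mu m)
      = TensorProduct.map mu.toLinearMap HH.a.toLinearMap (coact m)
  coact_counit : ∀ m : M,
    (TensorProduct.rid k M) ((TensorProduct.map LinearMap.id HH.counit) (coact m)) = mu.symm m
  compat : ∀ (h : H) (m : M) (n : ℕ) (h1 h2 : Fin n → H),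
      HH.comul h = ∑ i, h1 i ⊗ₜ[k] h2 i →
      ∀ (p : ℕ) (h21 h22 : Fin n → Fin p → H),
      (∀ i, HH.comul (h2 i) = ∑ j, h21 i j ⊗ₜ[k] h22 i j) →
      ∀ (q : ℕ) (m0 : Fin q → M) (m1 : Fin q → H),
      coact m = ∑ l, m0 l ⊗ₜ[k] m1 l →
      coact (act h m) = ∑ i, ∑ j, ∑ l,
        act (HH.a (h21 i j)) (m0 l) ⊗ₜ[k]
          HH.mul (HH.mul (B (h22 i j)) (HH.a.symm (m1 l))) (A (HH.S.symm (h1 i)))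

namespace HomHopf

variable {k : Type*} [Field k] {H : Type*} [AddCommGroup H] [Module k H] (HH : HomHopf k H)

lemma S_a_symm (x : H) : HH.S (HH.a.symm x) = HH.a.symm (HH.S x) := by
  apply HH.a.injective
  rw [← HH.S_a, HH.a.apply_symm_apply, HH.a.apply_symm_apply]

/-- Evaluating `u ⊗ v ⊗ w ↦ (T u · v) · α (S w)` on both sides of Hom-coassociativity shows
that a left convolution inverse `T` of the identity equals `S`. -/
def mulMulAntipode (T : H →ₗ[k] H) : H ⊗[k] (H ⊗[k] H) →ₗ[k] H :=
  lift HH.mul ∘ₗ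
    map (lift HH.mul ∘ₗ map T LinearMap.id) (HH.a.toLinearMap ∘ₗ HH.S.toLinearMap) ∘ₗ
    (TensorProduct.assoc k H H H).symm.toLinearMap

@[simp]
lemma mulMulAntipode_tmul (T : H →ₗ[k] H) (u v w : H) :
    HH.mulMulAntipode T (u ⊗ₜ (v ⊗ₜ w)) = HH.mul (HH.mul (T u) v) (HH.a (HH.S w)) :=
  rfl

lemma mulMulAntipode_comp_map_a_symm_comul {T : H →ₗ[k] H}
    (hTa : ∀ x, T (HH.a x) = HH.a (T x)) :
    HH.mulMulAntipode T ∘ₗ map HH.a.symm.toLinearMap HH.comul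
      = HH.a.toLinearMap ∘ₗ T ∘ₗ
          (TensorProduct.rid k H).toLinearMap ∘ₗ map LinearMap.id HH.counit := by
  refine ext' fun u v => ?_
  have slice : HH.mulMulAntipode T ∘ₗ TensorProduct.mk k H (H ⊗[k] H) (HH.a.symm u)
      = HH.mul (T u) ∘ₗ lift HH.mul ∘ₗ map LinearMap.id HH.S.toLinearMap := by
    refine ext' fun v w => ?_
    simp [← HH.hom_assoc, ← hTa]
  have := LinearMap.congr_fun slice (HH.comul v)
  simp only [LinearMap.comp_apply, TensorProduct.mk_apply] at this
  simp [this, HH.antipode_right, HH.mul_one']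

lemma mulMulAntipode_comp_assoc_map_comul_a_symm {T : H →ₗ[k] H}
    (hT : ∀ x, lift HH.mul (map T LinearMap.id (HH.comul x)) = HH.counit x • HH.one) :
    HH.mulMulAntipode T ∘ₗ (TensorProduct.assoc k H H H).toLinearMap ∘ₗ
        map HH.comul HH.a.symm.toLinearMap
      = HH.a.toLinearMap ∘ₗ HH.S.toLinearMap ∘ₗ
          (TensorProduct.lid k H).toLinearMap ∘ₗ map HH.counit LinearMap.id := by
  refine ext' fun u w => ?_
  have slice : HH.mulMulAntipode T ∘ₗ (TensorProduct.assoc k H H H).toLinearMap ∘ₗ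
        (TensorProduct.mk k (H ⊗[k] H) H).flip (HH.a.symm w)
      = (HH.mul.flip (HH.S w)) ∘ₗ lift HH.mul ∘ₗ map T LinearMap.id := by
    refine ext' fun u v => ?_
    simp [HH.S_a_symm]
  have := LinearMap.congr_fun slice (HH.comul u)
  simp only [LinearMap.comp_apply, LinearMap.flip_apply, TensorProduct.mk_apply,
    LinearEquiv.coe_coe] at this
  simp [this, hT, HH.one_mul']

theorem eq_S_of_isLeftConvInverse {T : H →ₗ[k] H} (hTa : ∀ x, T (HH.a x) = HH.a (T x))
    (hT : ∀ x, lift HH.mul (map T LinearMap.id (HH.comul x)) = HH.counit x • HH.one) :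
    T = HH.S.toLinearMap := by
  ext y
  have coassoc := congrArg (HH.mulMulAntipode T) (LinearMap.congr_fun HH.hom_coassoc (HH.a y))
  have left := LinearMap.congr_fun (HH.mulMulAntipode_comp_map_a_symm_comul hTa) (HH.comul (HH.a y))
  have right := LinearMap.congr_fun (HH.mulMulAntipode_comp_assoc_map_comul_a_symm hT)
    (HH.comul (HH.a y))
  simp only [LinearMap.comp_apply, LinearEquiv.coe_coe] at coassoc left right
  rw [left, right, HH.comul_counit, HH.counit_comul, HH.a.symm_apply_apply] at coassoc
  exact HH.a.injective coassoc

end HomHopf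

namespace IsHomHopfAuto

variable {k : Type*} [Field k] {H : Type*} [AddCommGroup H] [Module k H] {HH : HomHopf k H}
  {f g : H ≃ₗ[k] H}

lemma comul_comp (hf : IsHomHopfAuto HH f) :
    HH.comul ∘ₗ f.toLinearMap = map f.toLinearMap f.toLinearMap ∘ₗ HH.comul :=
  LinearMap.ext hf.map_comul

lemma map_a_symm (hf : IsHomHopfAuto HH f) (x : H) : f (HH.a.symm x) = HH.a.symm (f x) := by
  apply HH.a.injective
  rw [← hf.map_a, HH.a.apply_symm_apply, HH.a.apply_symm_apply]

protected lemma trans (hf : IsHomHopfAuto HH f) (hg : IsHomHopfAuto HH g) :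
    IsHomHopfAuto HH (f.trans g) where
  map_mul x y := by simp [hf.map_mul, hg.map_mul]
  map_one := by simp [hf.map_one, hg.map_one]
  map_comul x := by
    simp only [LinearEquiv.trans_apply, hf.map_comul, hg.map_comul, map_map]
    rfl
  map_counit x := by simp [hf.map_counit, hg.map_counit]
  map_a x := by simp [hf.map_a, hg.map_a]

protected lemma symm (hf : IsHomHopfAuto HH f) : IsHomHopfAuto HH f.symm where
  map_mul x y := f.injective (by simp [hf.map_mul])
  map_one := f.injective (by simp [hf.map_one])
  map_comul x := by
    have h := congrArg (map f.symm.toLinearMap f.symm.toLinearMap) (hf.map_comul (f.symm x))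
    simpa [map_map, LinearEquiv.symm_comp, map_id] using h.symm
  map_counit x := by rw [← hf.map_counit, f.apply_symm_apply]
  map_a x := f.injective (by simp [hf.map_a])

lemma map_S (hf : IsHomHopfAuto HH f) (x : H) : f (HH.S x) = HH.S (f x) := by
  set T := f.toLinearMap ∘ₗ HH.S.toLinearMap ∘ₗ f.symm.toLinearMap
  have hTa : ∀ x, T (HH.a x) = HH.a (T x) := fun x => by
    simp [T, hf.symm.map_a, HH.S_a, hf.map_a]
  have hT : ∀ x, lift HH.mul (map T LinearMap.id (HH.comul x)) = HH.counit x • HH.one := by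
    intro x
    obtain ⟨y, rfl⟩ := f.surjective x
    have conj : map T LinearMap.id ∘ₗ map f.toLinearMap f.toLinearMap
        = map f.toLinearMap f.toLinearMap ∘ₗ map HH.S.toLinearMap LinearMap.id :=
      ext' fun u v => by simp [T]
    have lift_mul : lift HH.mul ∘ₗ map f.toLinearMap f.toLinearMap = f.toLinearMap ∘ₗ lift HH.mul :=
      ext' fun u v => by simp [hf.map_mul]
    rw [hf.map_comul, ← LinearMap.comp_apply (map T _), conj, ← LinearMap.comp_apply (lift _),
      ← LinearMap.comp_assoc, lift_mul]
    simp [HH.antipode_left, hf.map_one, hf.map_counit]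
  simpa [T] using LinearMap.congr_fun (HH.eq_S_of_isLeftConvInverse hTa hT) (f x)

lemma map_S_symm (hf : IsHomHopfAuto HH f) (x : H) : f (HH.S.symm x) = HH.S.symm (f x) :=
  HH.S.injective (by rw [← hf.map_S, HH.S.apply_symm_apply, HH.S.apply_symm_apply])

end IsHomHopfAuto

namespace YDModule

variable {k : Type*} [Field k] {H : Type*} [AddCommGroup H] [Module k H] {HH : HomHopf k H}
  {A B : H ≃ₗ[k] H} {M : Type*} [AddCommGroup M] [Module k M]

def twist (Y : YDModule HH A B M) {φ ψ : H ≃ₗ[k] H} (hφ : IsHomHopfAuto HH φ)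
    (hψ : IsHomHopfAuto HH ψ) {A' B' : H ≃ₗ[k] H} (hA' : (φ.trans A).trans ψ = A')
    (hB' : (φ.trans B).trans ψ = B') : YDModule HH A' B' M where
  act := Y.act ∘ₗ φ.toLinearMap
  coact := map LinearMap.id ψ.toLinearMap ∘ₗ Y.coact
  mu := Y.mu
  hom_act h g m := by simpa [hφ.map_a, hφ.map_mul] using Y.hom_act (φ h) (φ g) m
  mu_act h m := by simpa [hφ.map_a] using Y.mu_act (φ h) m
  one_act m := by simpa [hφ.map_one] using Y.one_act m
  hom_coact := by
    have a_symm_comm : HH.a.symm.toLinearMap ∘ₗ ψ.toLinearMap = ψ.toLinearMap ∘ₗ HH.a.symm :=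
      LinearMap.ext fun x => (hψ.map_a_symm x).symm
    calc map Y.mu.symm.toLinearMap HH.comul ∘ₗ map LinearMap.id ψ.toLinearMap ∘ₗ Y.coact
        = map LinearMap.id (map ψ.toLinearMap ψ.toLinearMap) ∘ₗ
            map Y.mu.symm.toLinearMap HH.comul ∘ₗ Y.coact := by
          simp only [← LinearMap.comp_assoc, ← map_comp, LinearMap.id_comp, LinearMap.comp_id,
            hψ.comul_comp]
      _ = map LinearMap.id (map ψ.toLinearMap ψ.toLinearMap) ∘ₗ
            (TensorProduct.assoc k M H H).toLinearMap ∘ₗ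
            map Y.coact HH.a.symm.toLinearMap ∘ₗ Y.coact := by
          rw [Y.hom_coact]
      _ = _ := by
          simp only [← LinearMap.comp_assoc, map_map_comp_assoc_eq]
          simp only [LinearMap.comp_assoc, ← map_comp, LinearMap.comp_id, a_symm_comm]
  coact_mu m := by
    simp only [LinearMap.comp_apply, Y.coact_mu, map_map, LinearMap.id_comp, LinearMap.comp_id]
    congr 2
    exact LinearMap.ext hψ.map_a
  coact_counit m := by
    simp only [LinearMap.comp_apply, map_map, LinearMap.id_comp]
    rw [show HH.counit ∘ₗ ψ.toLinearMap = HH.counit from LinearMap.ext hψ.map_counit]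
    exact Y.coact_counit m
  compat h m n h1 h2 hΔ p h21 h22 hΔ2 q m0 m1 hρ := by
    subst hA' hB'
    have hΔφ : HH.comul (φ h) = ∑ i, φ (h1 i) ⊗ₜ φ (h2 i) := by
      simp [hφ.map_comul, hΔ]
    have hΔ2φ : ∀ i, HH.comul (φ (h2 i)) = ∑ j, φ (h21 i j) ⊗ₜ φ (h22 i j) := fun i => by
      simp [hφ.map_comul, hΔ2 i]
    have hρψ : Y.coact m = ∑ l, m0 l ⊗ₜ ψ.symm (m1 l) := by
      have h := congrArg (map LinearMap.id ψ.symm.toLinearMap) hρ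
      simpa [map_map, LinearEquiv.symm_comp, map_id] using h
    simp only [LinearMap.comp_apply, LinearEquiv.coe_coe]
    rw [Y.compat _ _ n _ _ hΔφ p _ _ hΔ2φ q _ _ hρψ]
    simp [hψ.map_mul, hφ.map_a, hψ.map_a_symm, hφ.map_S_symm]

end YDModule

theorem stmt_10_general {k : Type*} [Field k] {H : Type*} [AddCommGroup H] [Module k H]
    {N : Type*} [AddCommGroup N] [Module k N]
    (HH : HomHopf k H) (A B C D : H ≃ₗ[k] H)
    (hA : IsHomHopfAuto HH A) (hB : IsHomHopfAuto HH B)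
    (hC : IsHomHopfAuto HH C)
    (YN : YDModule HH C D N) :
    ∃ Y : YDModule HH ((A.symm.trans C).trans A)
        ((((((A.symm.trans C).trans B).trans C.symm).trans D).trans B.symm).trans A) N,
      Y.act = YN.act.comp (((A.symm.trans C).trans B).trans C.symm).toLinearMap ∧
      Y.coact = (TensorProduct.map LinearMap.id (B.symm.trans A).toLinearMap).comp YN.coact ∧
      Y.mu = YN.mu :=
  ⟨YN.twist (((hA.symm.trans hC).trans hB).trans hC.symm) (hB.symm.trans hA)
    (by ext; simp) rfl, rfl, rfl, rfl⟩

/-- Proposition 3.3: if (N,ν) is a (C,D)-Yetter-Drinfeld Hom-module and (A,B) is a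
pair of Hom-Hopf automorphisms, then N with action h▷n = (C⁻¹BCA⁻¹)(h)·n and
coaction n ↦ n₍₀₎ ⊗ (AB⁻¹)(n₍₁₎) is an (ACA⁻¹, AB⁻¹DC⁻¹BCA⁻¹)-Yetter-Drinfeld
Hom-module. -/
theorem stmt_10 {k : Type*} [Field k] {H : Type*} [AddCommGroup H] [Module k H]
    {N : Type*} [AddCommGroup N] [Module k N]
    (HH : HomHopf k H) (A B C D : H ≃ₗ[k] H)
    (hA : IsHomHopfAuto HH A) (hB : IsHomHopfAuto HH B)
    (hC : IsHomHopfAuto HH C) (hD : IsHomHopfAuto HH D)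
    (YN : YDModule HH C D N) :
    ∃ Y : YDModule HH ((A.symm.trans C).trans A)
        ((((((A.symm.trans C).trans B).trans C.symm).trans D).trans B.symm).trans A) N,
      Y.act = YN.act.comp (((A.symm.trans C).trans B).trans C.symm).toLinearMap ∧
      Y.coact = (TensorProduct.map LinearMap.id (B.symm.trans A).toLinearMap).comp YN.coact ∧
      Y.mu = YN.mu :=
  stmt_10_general HH A B C D hA hB hC YN
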